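/- arXiv:2010.08936 — 3 statements merged into one kernel-verified Lean document; each statement's English description precedes it below -/
import Mathlib

section
/- Noncrossing property of minimal densest subgraphs: if H is a minimal densest subgraph of G and K is any densest subgraph of G, then either E(H) ⊆ E(K) or E(H) ∩ E(K) = ∅. -/
open scoped BigOperators

variable {V : Type*}

/-- Density of a subgraph: m(H)/(n(H)-1). -/
noncomputable def density (G : SimpleGraph V) (H : G.Subgraph) : ℝ :=
  (H.edgeSet.ncard : ℝ) / ((H.verts.ncard : ℝ) - 1)

/-- Fractional arboricity: maximum density over connected subgraphs. -/
noncomputable def fracArboricity (G : SimpleGraph V) : ℝ :=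
  sSup {d : ℝ | ∃ H : G.Subgraph, H.Connected ∧ d = density G H}

/-- A densest subgraph: connected, attaining the maximum density. -/
def IsDensest (G : SimpleGraph V) (H : G.Subgraph) : Prop :=
  H.Connected ∧ density G H = fracArboricity G

/-- A minimal densest subgraph: no proper subgraph is densest. -/
def IsMinimalDensest (G : SimpleGraph V) (H : G.Subgraph) : Prop :=
  IsDensest G H ∧ ∀ K : G.Subgraph, K < H → ¬ IsDensest G K

/-!
Let `g` be the maximum density, so every connected subgraph `L` has `m(L) ≤ g (n(L) - 1)`;
splitting off a connected component shows that a disconnected nonempty one even has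
`m(L) ≤ g (n(L) - 2)`. If `H` and `K` are densest and share an edge, their union is connected, so
inclusion–exclusion gives `m(H ∩ K) ≥ g (n(H ∩ K) - 1)`. Hence `H ∩ K` is connected and densest,
and minimality of `H` forces `H ∩ K = H`.
-/

namespace SimpleGraph.Subgraph

variable {G : SimpleGraph V}

theorem coeSubgraph_induce_top (L : G.Subgraph) (s : Set L.verts) :
    Subgraph.coeSubgraph ((⊤ : L.coe.Subgraph).induce s) = L.induce (Subtype.val '' s) := by
  ext
  · simp
  · simp only [coeSubgraph_adj, induce_adj, top_adj, coe_adj, Set.mem_image]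
    grind

theorem connected_induce_image_supp (L : G.Subgraph) (C : L.coe.ConnectedComponent) :
    (L.induce (Subtype.val '' C.supp)).Connected :=
  coeSubgraph_induce_top L C.supp ▸ C.connected_toSubgraph.coeSubgraph

theorem mem_image_supp_of_adj {L : G.Subgraph} {C : L.coe.ConnectedComponent} {x y : V}
    (hx : x ∈ Subtype.val '' C.supp) (hxy : L.Adj x y) : y ∈ Subtype.val '' C.supp := by
  obtain ⟨x, hx, rfl⟩ := hx
  refine ⟨⟨y, hxy.snd_mem⟩, ?_, rfl⟩
  rw [ConnectedComponent.mem_supp_iff] at hx ⊢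
  rw [← hx]
  exact (ConnectedComponent.connectedComponentMk_eq_of_adj (by simpa using hxy)).symm

theorem edgeSet_induce_union_induce_diff {L : G.Subgraph} {s : Set V}
    (hs : ∀ ⦃x y⦄, x ∈ s → L.Adj x y → y ∈ s) :
    (L.induce s).edgeSet ∪ (L.induce (L.verts \ s)).edgeSet = L.edgeSet := by
  ext ⟨x, y⟩
  refine ⟨by rintro (⟨-, -, h⟩ | ⟨-, -, h⟩) <;> exact h, fun h => ?_⟩
  by_cases hx : x ∈ s
  · exact .inl ⟨hx, hs hx h, h⟩
  · exact .inr ⟨⟨h.fst_mem, hx⟩, ⟨h.snd_mem, fun hy => hx (hs hy h.symm)⟩, h⟩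

theorem disjoint_edgeSet_induce_induce_diff (L : G.Subgraph) (s t : Set V) :
    Disjoint (L.induce s).edgeSet (L.induce (t \ s)).edgeSet := by
  rw [Set.disjoint_left]
  rintro ⟨x, y⟩ hs ht
  exact ht.1.2 hs.1

theorem exists_connected_split [Finite V] {L : G.Subgraph} (hne : L.verts.Nonempty)
    (hnc : ¬ L.Connected) :
    ∃ L₁ L₂ : G.Subgraph, L₁.Connected ∧ L₂.verts.Nonempty ∧
      L₁.verts.ncard + L₂.verts.ncard = L.verts.ncard ∧
      L₁.edgeSet.ncard + L₂.edgeSet.ncard = L.edgeSet.ncard := by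
  obtain ⟨a, b, hab⟩ : ∃ a b : L.verts, ¬ L.coe.Reachable a b := by
    simpa [Subgraph.connected_iff, hne, Subgraph.preconnected_iff, Preconnected] using hnc
  set s := Subtype.val '' (L.coe.connectedComponentMk a).supp
  have hs : s ⊆ L.verts := Set.image_subset_iff.mpr fun x _ => x.2
  have hb : (b : V) ∉ s := by
    rintro ⟨b', hb', hbb'⟩
    rw [Subtype.val_injective hbb', ConnectedComponent.mem_supp_iff,
      ConnectedComponent.eq] at hb'
    exact hab hb'.symm
  refine ⟨L.induce s, L.induce (L.verts \ s), connected_induce_image_supp L _,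
    ⟨b, b.2, hb⟩, ?_, ?_⟩
  · rw [induce_verts, induce_verts, ← Set.ncard_union_eq Set.disjoint_sdiff_right,
      Set.union_sdiff_cancel hs]
  · rw [← Set.ncard_union_eq (disjoint_edgeSet_induce_induce_diff L s L.verts),
      edgeSet_induce_union_induce_diff fun _ _ => mem_image_supp_of_adj]

section Counting

variable [Finite V] {g : ℝ}

theorem ncard_edgeSet_le_of_nonempty
    (hcon : ∀ L : G.Subgraph, L.Connected → (L.edgeSet.ncard : ℝ) ≤ g * (L.verts.ncard - 1))
    (hg : 0 ≤ g) (L : G.Subgraph) (hne : L.verts.Nonempty) :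
    (L.edgeSet.ncard : ℝ) ≤ g * (L.verts.ncard - 1) := by
  induction hn : L.verts.ncard using Nat.strong_induction_on generalizing L with
  | _ n ih =>
    subst hn
    by_cases hc : L.Connected
    · exact hcon L hc
    obtain ⟨L₁, L₂, hc₁, hne₂, hv, he⟩ := exists_connected_split hne hc
    have h₁ := hcon L₁ hc₁
    have h₂ := ih _ (by have := (Set.ncard_pos L₁.verts.toFinite).mpr hc₁.nonempty; omega)
      L₂ hne₂ rfl
    rw [← hv, ← he]
    push_cast
    linarith

theorem ncard_edgeSet_le_of_not_connected
    (hcon : ∀ L : G.Subgraph, L.Connected → (L.edgeSet.ncard : ℝ) ≤ g * (L.verts.ncard - 1))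
    (hg : 0 ≤ g) {L : G.Subgraph} (hne : L.verts.Nonempty) (hnc : ¬ L.Connected) :
    (L.edgeSet.ncard : ℝ) ≤ g * (L.verts.ncard - 2) := by
  obtain ⟨L₁, L₂, hc₁, hne₂, hv, he⟩ := exists_connected_split hne hnc
  have h₁ := hcon L₁ hc₁
  have h₂ := ncard_edgeSet_le_of_nonempty hcon hg L₂ hne₂
  rw [← hv, ← he]
  push_cast
  linarith

end Counting

theorem one_lt_ncard_verts_of_adj [Finite V] {L : G.Subgraph} {x y : V} (h : L.Adj x y) :
    1 < L.verts.ncard :=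
  (Set.one_lt_ncard_iff L.verts.toFinite).mpr ⟨x, y, h.fst_mem, h.snd_mem, h.ne⟩

theorem ncard_verts_sup_add_ncard_verts_inf [Finite V] (H K : G.Subgraph) :
    (H ⊔ K).verts.ncard + (H ⊓ K).verts.ncard = H.verts.ncard + K.verts.ncard :=
  Set.ncard_union_add_ncard_inter H.verts K.verts

theorem ncard_edgeSet_sup_add_ncard_edgeSet_inf [Finite V] (H K : G.Subgraph) :
    (H ⊔ K).edgeSet.ncard + (H ⊓ K).edgeSet.ncard = H.edgeSet.ncard + K.edgeSet.ncard := by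
  rw [edgeSet_sup, edgeSet_inf]
  exact Set.ncard_union_add_ncard_inter H.edgeSet K.edgeSet

end SimpleGraph.Subgraph

open SimpleGraph

variable {G : SimpleGraph V}

theorem density_le_ncard_edgeSet (L : G.Subgraph) : density G L ≤ L.edgeSet.ncard := by
  unfold density
  rcases le_or_gt ((L.verts.ncard : ℝ) - 1) 0 with h | h
  · exact (div_nonpos_of_nonneg_of_nonpos (Nat.cast_nonneg _) h).trans (Nat.cast_nonneg _)
  · have : 1 < L.verts.ncard := by exact_mod_cast sub_pos.mp h
    refine div_le_self (Nat.cast_nonneg _) ?_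
    have : (2 : ℝ) ≤ L.verts.ncard := by exact_mod_cast this
    linarith

theorem density_le_fracArboricity [Finite V] {L : G.Subgraph} (hL : L.Connected) :
    density G L ≤ fracArboricity G := by
  refine le_csSup ⟨G.edgeSet.ncard, ?_⟩ ⟨L, hL, rfl⟩
  rintro _ ⟨L', -, rfl⟩
  exact (density_le_ncard_edgeSet L').trans
    (by exact_mod_cast Set.ncard_le_ncard L'.edgeSet_subset)

theorem density_eq_iff {L : G.Subgraph} (hL : 1 < L.verts.ncard) {d : ℝ} :
    density G L = d ↔ (L.edgeSet.ncard : ℝ) = d * (L.verts.ncard - 1) := by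
  have : (1 : ℝ) < L.verts.ncard := by exact_mod_cast hL
  exact div_eq_iff (by linarith)

theorem ncard_edgeSet_le_fracArboricity_mul [Finite V] {L : G.Subgraph} (hL : L.Connected) :
    (L.edgeSet.ncard : ℝ) ≤ fracArboricity G * (L.verts.ncard - 1) := by
  by_cases hn : 1 < L.verts.ncard
  · have : (1 : ℝ) < L.verts.ncard := by exact_mod_cast hn
    rw [← div_le_iff₀ (by linarith)]
    exact density_le_fracArboricity hL
  · have hn1 : L.verts.ncard = 1 := by
      have := (Set.ncard_pos L.verts.toFinite).mpr hL.nonempty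
      omega
    have he : L.edgeSet = ∅ := by
      refine Set.eq_empty_of_forall_notMem ?_
      rintro ⟨x, y⟩ hxy
      exact hn (Subgraph.one_lt_ncard_verts_of_adj hxy)
    simp [he, hn1]

theorem IsDensest.ncard_edgeSet_eq [Finite V] {H : G.Subgraph} (hH : IsDensest G H) {x y : V}
    (hxy : H.Adj x y) :
    (H.edgeSet.ncard : ℝ) = fracArboricity G * (H.verts.ncard - 1) :=
  (density_eq_iff (Subgraph.one_lt_ncard_verts_of_adj hxy)).mp hH.2

theorem IsDensest.fracArboricity_pos [Finite V] {H : G.Subgraph} (hH : IsDensest G H) {x y : V}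
    (hxy : H.Adj x y) : 0 < fracArboricity G := by
  have hn := Subgraph.one_lt_ncard_verts_of_adj hxy
  have hm : 0 < H.edgeSet.ncard := (Set.ncard_pos H.edgeSet.toFinite).mpr ⟨s(x, y), hxy⟩
  rw [← hH.2, density]
  exact div_pos (by exact_mod_cast hm) (by rw [sub_pos]; exact_mod_cast hn)

theorem IsDensest.inf [Finite V] {H K : G.Subgraph} (hH : IsDensest G H) (hK : IsDensest G K)
    {x y : V} (hxyH : H.Adj x y) (hxyK : K.Adj x y) : IsDensest G (H ⊓ K) := by
  set g := fracArboricity G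
  have hxy : (H ⊓ K).Adj x y := ⟨hxyH, hxyK⟩
  have hg := hH.fracArboricity_pos hxyH
  have hcon : ∀ L : G.Subgraph, L.Connected → (L.edgeSet.ncard : ℝ) ≤ g * (L.verts.ncard - 1) :=
    fun L => ncard_edgeSet_le_fracArboricity_mul
  have hsup := hcon _ (Subgraph.connected_sup hH.1.preconnected hK.1.preconnected
    ⟨x, hxy.fst_mem⟩)
  have hv : ((H ⊔ K).verts.ncard : ℝ) + (H ⊓ K).verts.ncard = H.verts.ncard + K.verts.ncard := by
    exact_mod_cast Subgraph.ncard_verts_sup_add_ncard_verts_inf H K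
  have he : ((H ⊔ K).edgeSet.ncard : ℝ) + (H ⊓ K).edgeSet.ncard =
      H.edgeSet.ncard + K.edgeSet.ncard := by
    exact_mod_cast Subgraph.ncard_edgeSet_sup_add_ncard_edgeSet_inf H K
  have hinf : g * ((H ⊓ K).verts.ncard - 1) ≤ (H ⊓ K).edgeSet.ncard := by
    linarith [hH.ncard_edgeSet_eq hxyH, hK.ncard_edgeSet_eq hxyK, congrArg (g * ·) hv]
  have hconn : (H ⊓ K).Connected := by
    by_contra hnc
    have := Subgraph.ncard_edgeSet_le_of_not_connected hcon hg.le ⟨x, hxy.fst_mem⟩ hnc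
    linarith
  refine ⟨hconn, (density_eq_iff (Subgraph.one_lt_ncard_verts_of_adj hxy)).mpr ?_⟩
  exact le_antisymm (hcon _ hconn) hinf

theorem minimalDensest_noncrossing_general [Fintype V] (G : SimpleGraph V)
    (H K : G.Subgraph) (hH : IsMinimalDensest G H) (hK : IsDensest G K) :
    H.edgeSet ⊆ K.edgeSet ∨ H.edgeSet ∩ K.edgeSet = ∅ := by
  refine or_iff_not_imp_right.mpr fun hHK => ?_
  obtain ⟨⟨x, y⟩, hxyH, hxyK⟩ := Set.nonempty_iff_ne_empty.mpr hHK
  have hinf := hH.1.inf hK hxyH hxyK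
  rcases (inf_le_left : H ⊓ K ≤ H).eq_or_lt with heq | hlt
  · exact Subgraph.edgeSet_mono (heq ▸ inf_le_right)
  · exact absurd hinf (hH.2 _ hlt)

/-- noncrossing property of minimal densest subgraphs. -/
theorem minimalDensest_noncrossing [Fintype V] (G : SimpleGraph V) (hG : G.Connected)
    (H K : G.Subgraph) (hH : IsMinimalDensest G H) (hK : IsDensest G K) :
    H.edgeSet ⊆ K.edgeSet ∨ H.edgeSet ∩ K.edgeSet = ∅ :=
  minimalDensest_noncrossing_general G H K hH hK
end

section
/- Any two distinct minimal densest subgraphs of a graph G share at most one common vertex. -/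
open scoped BigOperators

variable {V : Type*}

/-!
Write `g` for the fractional arboricity. Every nonempty subgraph `H` has `m(H) ≤ g (n(H) - 1)`:
connected ones by maximality of `g`, the others by adding the bounds for two parts with no edge
between them, which even gains `g`. If densest `H₁`, `H₂` share two vertices, `H₁ ⊔ H₂` is
connected, so `m(H₁ ⊔ H₂) ≤ g (n(H₁ ⊔ H₂) - 1)`, and inclusion–exclusion gives
`m(H₁ ⊓ H₂) ≥ g (n(H₁ ⊓ H₂) - 1)`. As `g > 0`, this leaves no room for `H₁ ⊓ H₂` to split, so it
is itself densest, against the minimality of `H₁` or `H₂`.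
-/

namespace SimpleGraph.Subgraph

variable {G : SimpleGraph V}

lemma edgeSet_eq_empty_of_ncard_verts_le_one [Finite V] {H : G.Subgraph}
    (h : H.verts.ncard ≤ 1) : H.edgeSet = ∅ := by
  refine Set.eq_empty_of_forall_notMem fun e he ↦ ?_
  induction e using Sym2.ind with
  | _ a b =>
    exact he.ne <| (Set.ncard_le_one_iff_subsingleton.mp h) (H.edge_vert he)
      (H.edge_vert he.symm)

lemma ncard_edgeSet_induce_add_induce_sdiff [Finite V] (K : G.Subgraph) {S : Set V}
    (hS : ∀ a b, K.Adj a b → a ∈ S → b ∈ S) :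
    (K.induce S).edgeSet.ncard + (K.induce (K.verts \ S)).edgeSet.ncard = K.edgeSet.ncard := by
  have hunion : (K.induce S).edgeSet ∪ (K.induce (K.verts \ S)).edgeSet = K.edgeSet := by
    ext e
    induction e using Sym2.ind with
    | _ a b =>
      simp only [Set.mem_union]
      refine ⟨by rintro (⟨-, -, h⟩ | ⟨-, -, h⟩) <;> exact h, fun hab ↦ ?_⟩
      by_cases ha : a ∈ S
      · exact .inl ⟨ha, hS a b hab ha, hab⟩
      · exact .inr ⟨⟨K.edge_vert hab, ha⟩,
          ⟨K.edge_vert hab.symm, fun hb ↦ ha (hS b a hab.symm hb)⟩, hab⟩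
  have hdisj : Disjoint (K.induce S).edgeSet (K.induce (K.verts \ S)).edgeSet := by
    refine Set.disjoint_left.mpr fun e h₁ h₂ ↦ ?_
    induction e using Sym2.ind with
    | _ a b => exact h₂.2.1.2 h₁.2.1
  rw [← hunion, Set.ncard_union_eq hdisj]

lemma exists_split_of_not_preconnected [Finite V] {K : G.Subgraph} (hK : ¬K.Preconnected) :
    ∃ K₁ K₂ : G.Subgraph, K₁.verts.Nonempty ∧ K₂.verts.Nonempty ∧
      K₁.verts.ncard + K₂.verts.ncard = K.verts.ncard ∧
      K₁.edgeSet.ncard + K₂.edgeSet.ncard = K.edgeSet.ncard := by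
  obtain ⟨x, y, hxy⟩ : ∃ x y : K.verts, ¬K.coe.Reachable x y := by
    simpa [Subgraph.preconnected_iff, SimpleGraph.Preconnected] using hK
  set S : Set V := {u | ∃ hu : u ∈ K.verts, K.coe.Reachable x ⟨u, hu⟩}
  have hSK : S ⊆ K.verts := fun u hu ↦ hu.1
  have hS : ∀ a b, K.Adj a b → a ∈ S → b ∈ S := fun a b hab ⟨ha, hxa⟩ ↦
    ⟨K.edge_vert hab.symm, hxa.trans (Adj.reachable (G := K.coe) hab.coe)⟩
  refine ⟨K.induce S, K.induce (K.verts \ S), ⟨x, x.2, .rfl⟩, ⟨y, y.2, fun ⟨_, h⟩ ↦ hxy h⟩,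
    ?_, K.ncard_edgeSet_induce_add_induce_sdiff hS⟩
  simpa [add_comm] using Set.ncard_sdiff_add_ncard_of_subset hSK

end SimpleGraph.Subgraph

open SimpleGraph

section Density

variable {G : SimpleGraph V} {H : G.Subgraph}

lemma density_le_ncard_edgeSet_s3 (G : SimpleGraph V) (H : G.Subgraph) :
    density G H ≤ H.edgeSet.ncard := by
  have hm : (0 : ℝ) ≤ H.edgeSet.ncard := Nat.cast_nonneg _
  unfold density
  rcases Nat.lt_or_ge H.verts.ncard 2 with hn | hn
  · interval_cases H.verts.ncard <;> norm_num [div_neg]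
  · have : (2 : ℝ) ≤ H.verts.ncard := mod_cast hn
    exact div_le_self hm (by linarith)

lemma bddAbove_density [Finite V] (G : SimpleGraph V) :
    BddAbove {d : ℝ | ∃ H : G.Subgraph, H.Connected ∧ d = density G H} := by
  refine ⟨Nat.card (Sym2 V), ?_⟩
  rintro d ⟨H, -, rfl⟩
  exact (density_le_ncard_edgeSet_s3 G H).trans (mod_cast Set.ncard_le_card _)

lemma density_le_fracArboricity_s3 [Finite V] (hH : H.Connected) :
    density G H ≤ fracArboricity G :=
  le_csSup (bddAbove_density G) ⟨H, hH, rfl⟩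

lemma fracArboricity_nonneg [Finite V] (G : SimpleGraph V) : 0 ≤ fracArboricity G := by
  refine Real.sSup_nonneg ?_
  rintro d ⟨H, hH, rfl⟩
  have : 1 ≤ H.verts.ncard := (Set.ncard_pos).mpr hH.nonempty
  unfold density
  exact div_nonneg (Nat.cast_nonneg _) (sub_nonneg.mpr (mod_cast this))

lemma ncard_edgeSet_le_of_connected [Finite V] (hH : H.Connected) :
    (H.edgeSet.ncard : ℝ) ≤ fracArboricity G * (H.verts.ncard - 1) := by
  rcases Nat.lt_or_ge H.verts.ncard 2 with hn | hn
  · rw [H.edgeSet_eq_empty_of_ncard_verts_le_one (by omega)]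
    have : 1 ≤ H.verts.ncard := (Set.ncard_pos).mpr hH.nonempty
    have : (H.verts.ncard : ℝ) = 1 := by norm_cast; omega
    simp [this]
  · have hpos : (0 : ℝ) < H.verts.ncard - 1 := by
      rw [sub_pos]; exact_mod_cast hn
    exact (div_le_iff₀ hpos).mp (density_le_fracArboricity_s3 hH)

lemma ncard_edgeSet_le [Finite V] (hH : H.verts.Nonempty) :
    (H.edgeSet.ncard : ℝ) ≤ fracArboricity G * (H.verts.ncard - 1) := by
  induction hn : H.verts.ncard using Nat.strong_induction_on generalizing H with
  | _ n ih =>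
    subst hn
    by_cases hc : H.Preconnected
    · exact ncard_edgeSet_le_of_connected (H.connected_iff.mpr ⟨hc, hH⟩)
    obtain ⟨H₁, H₂, h₁, h₂, hv, he⟩ := H.exists_split_of_not_preconnected hc
    have := (Set.ncard_pos).mpr h₁
    have := (Set.ncard_pos).mpr h₂
    have b₁ := ih _ (by omega) h₁ rfl
    have b₂ := ih _ (by omega) h₂ rfl
    have hvR : (H₁.verts.ncard : ℝ) + H₂.verts.ncard = H.verts.ncard := mod_cast hv
    have heR : (H₁.edgeSet.ncard : ℝ) + H₂.edgeSet.ncard = H.edgeSet.ncard := mod_cast he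
    nlinarith [fracArboricity_nonneg G]

end Density

section Densest

variable {G : SimpleGraph V} {H H₁ H₂ : G.Subgraph}

lemma IsDensest.ncard_edgeSet_eq_s3 (h : IsDensest G H) (hn : 1 < H.verts.ncard) :
    (H.edgeSet.ncard : ℝ) = fracArboricity G * (H.verts.ncard - 1) := by
  have hpos : (H.verts.ncard : ℝ) - 1 ≠ 0 := sub_ne_zero.mpr (mod_cast hn.ne')
  rw [← h.2, density, div_mul_cancel₀ _ hpos]

lemma IsDensest.fracArboricity_pos_s3 [Finite V] (h : IsDensest G H) (hn : 1 < H.verts.ncard) :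
    0 < fracArboricity G := by
  have : Nontrivial H.verts := (Set.one_lt_ncard_iff_nontrivial.mp hn).coe_sort
  obtain ⟨v, hv⟩ := h.1.nonempty
  obtain ⟨w, hvw⟩ := h.1.preconnected.exists_adj_of_nontrivial ⟨v, hv⟩
  have hm : (0 : ℝ) < H.edgeSet.ncard := mod_cast (Set.ncard_pos).mpr ⟨s(v, w), hvw⟩
  have hn' : (0 : ℝ) < H.verts.ncard - 1 := sub_pos.mpr (mod_cast hn)
  rw [← h.2]
  exact div_pos hm hn'

lemma connected_of_ncard_edgeSet_ge [Finite V] (hg : 0 < fracArboricity G)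
    (hH : H.verts.Nonempty)
    (h : fracArboricity G * (H.verts.ncard - 1) ≤ H.edgeSet.ncard) : H.Connected := by
  refine H.connected_iff.mpr ⟨by_contra fun hc ↦ ?_, hH⟩
  obtain ⟨H₁, H₂, h₁, h₂, hv, he⟩ := H.exists_split_of_not_preconnected hc
  have b₁ := ncard_edgeSet_le h₁
  have b₂ := ncard_edgeSet_le h₂
  have hvR : (H₁.verts.ncard : ℝ) + H₂.verts.ncard = H.verts.ncard := mod_cast hv
  have heR : (H₁.edgeSet.ncard : ℝ) + H₂.edgeSet.ncard = H.edgeSet.ncard := mod_cast he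
  nlinarith

lemma isDensest_of_ncard_edgeSet_ge [Finite V] (hg : 0 < fracArboricity G)
    (hn : 1 < H.verts.ncard)
    (h : fracArboricity G * (H.verts.ncard - 1) ≤ H.edgeSet.ncard) : IsDensest G H := by
  have hH : H.verts.Nonempty := (Set.one_lt_ncard_iff_nontrivial.mp hn).nonempty
  have hc := connected_of_ncard_edgeSet_ge hg hH h
  have hpos : (H.verts.ncard : ℝ) - 1 ≠ 0 := sub_ne_zero.mpr (mod_cast hn.ne')
  refine ⟨hc, ?_⟩
  rw [density, le_antisymm (ncard_edgeSet_le_of_connected hc) h, mul_div_cancel_right₀ _ hpos]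

lemma IsDensest.inf_s3 [Finite V] (h₁ : IsDensest G H₁) (h₂ : IsDensest G H₂)
    (hn : 1 < (H₁.verts ∩ H₂.verts).ncard) : IsDensest G (H₁ ⊓ H₂) := by
  have hn₁ : 1 < H₁.verts.ncard := hn.trans_le (Set.ncard_le_ncard Set.inter_subset_left)
  have hn₂ : 1 < H₂.verts.ncard := hn.trans_le (Set.ncard_le_ncard Set.inter_subset_right)
  have hne : (H₁ ⊓ H₂).verts.Nonempty := (Set.one_lt_ncard_iff_nontrivial.mp hn).nonempty
  have hsup := ncard_edgeSet_le_of_connected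
    (Subgraph.connected_sup h₁.1.preconnected h₂.1.preconnected hne)
  have hv : ((H₁ ⊔ H₂).verts.ncard : ℝ) + (H₁ ⊓ H₂).verts.ncard =
      H₁.verts.ncard + H₂.verts.ncard :=
    mod_cast Set.ncard_union_add_ncard_inter H₁.verts H₂.verts
  have he : ((H₁ ⊔ H₂).edgeSet.ncard : ℝ) + (H₁ ⊓ H₂).edgeSet.ncard =
      H₁.edgeSet.ncard + H₂.edgeSet.ncard := by
    rw [Subgraph.edgeSet_sup, Subgraph.edgeSet_inf]
    exact_mod_cast Set.ncard_union_add_ncard_inter H₁.edgeSet H₂.edgeSet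
  refine isDensest_of_ncard_edgeSet_ge (h₁.fracArboricity_pos_s3 hn₁) hn ?_
  linear_combination hsup + fracArboricity G * hv - he - h₁.ncard_edgeSet_eq_s3 hn₁ -
    h₂.ncard_edgeSet_eq_s3 hn₂

end Densest

theorem minimalDensest_share_at_most_one_vertex_general [Fintype V] (G : SimpleGraph V)
    (H1 H2 : G.Subgraph)
    (h1 : IsMinimalDensest G H1) (h2 : IsMinimalDensest G H2) (hne : H1 ≠ H2) :
    (H1.verts ∩ H2.verts).ncard ≤ 1 := by
  by_contra! hn
  have hinf : IsDensest G (H1 ⊓ H2) := h1.1.inf_s3 h2.1 hn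
  rcases (inf_le_left : H1 ⊓ H2 ≤ H1).lt_or_eq with hlt | heq
  · exact h1.2 _ hlt hinf
  · exact h2.2 H1 ((inf_eq_left.mp heq).lt_of_ne hne) h1.1

/-- two distinct minimal densest subgraphs share at most one vertex. -/
theorem minimalDensest_share_at_most_one_vertex [Fintype V] (G : SimpleGraph V)
    (hG : G.Connected) (H1 H2 : G.Subgraph)
    (h1 : IsMinimalDensest G H1) (h2 : IsMinimalDensest G H2) (hne : H1 ≠ H2) :
    (H1.verts ∩ H2.verts).ncard ≤ 1 :=
  minimalDensest_share_at_most_one_vertex_general G H1 H2 h1 h2 hne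
end

section
/- Monotonicity along the ancestor relation: if x is a core allocation of the arboricity game, P and Q are prime sets with Q an ancestor of P, then x_e ≤ x_f for every e ∈ P and f ∈ Q. -/
/-! Suppose `x f < x e`. Partition the edges into `a = arboricity G.edgeSet` forests. A core
allocation pays `a` in total and at most `1` on each forest, so it pays exactly `1` on each, and
each forest is a maximum-weight forest. By the exchange argument, each forest joins the endpoints
of every edge heavier than `x f` by a path of such heavy edges; hence on the component of `e` in the
graph of heavy edges every forest restricts to a spanning tree. These trees are edge-disjoint, so
the component has density exactly `a`, the fractional arboricity: it is a densest subgraph. It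
contains `e`, hence all of `P`, hence all of `Q`, including the edge `f`, which is not heavy. -/

open scoped BigOperators

variable {V : Type*}

/-- A set of edges is a forest if the graph it spans is acyclic. -/
def IsForestEdgeSet (F : Set (Sym2 V)) : Prop :=
  (SimpleGraph.fromEdgeSet F).IsAcyclic

/-- Arboricity of an edge set: minimum number of forests covering it. -/
noncomputable def arboricity (S : Set (Sym2 V)) : ℕ :=
  sInf {k : ℕ | ∃ F : Fin k → Set (Sym2 V),
    (∀ i, IsForestEdgeSet (F i)) ∧ S ⊆ ⋃ i, F i}

/-- A spanning tree of `G`, as a subgraph. -/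
def IsSpanningTree (G : SimpleGraph V) (T : G.Subgraph) : Prop :=
  T.IsSpanning ∧ T.coe.IsTree

/-- Membership in the core of the arboricity game on `G`:
nonnegative, efficient, and no coalition pays more than its arboricity. -/
def inCore (G : SimpleGraph V) (x : Sym2 V → ℝ) : Prop :=
  (∀ e, 0 ≤ x e) ∧ (∑ᶠ e ∈ G.edgeSet, x e) = (arboricity G.edgeSet : ℝ) ∧
    ∀ S : Set (Sym2 V), S ⊆ G.edgeSet → (∑ᶠ e ∈ S, x e) ≤ (arboricity S : ℝ)

open SimpleGraph Set Function

section Forests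

variable {F F' : Set (Sym2 V)}

lemma IsForestEdgeSet.mono (h : F' ⊆ F) (hF : IsForestEdgeSet F) : IsForestEdgeSet F' :=
  IsAcyclic.anti (fromEdgeSet_mono h) hF

lemma isForestEdgeSet_singleton (e : Sym2 V) : IsForestEdgeSet {e} := by
  induction e using Sym2.ind with
  | _ u v =>
    have := (isAcyclic_sup_fromEdgeSet_iff (G := ⊥) (u := u) (v := v)).mpr
      ⟨isAcyclic_bot, fun h => Or.inl (reachable_bot.mp h)⟩
    simpa [edge, IsForestEdgeSet] using this

lemma IsForestEdgeSet.insert (hF : IsForestEdgeSet F) {u v : V}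
    (huv : ¬ (fromEdgeSet F).Reachable u v) : IsForestEdgeSet (insert s(u, v) F) := by
  have := hF.sup_edge_of_not_reachable huv
  rwa [edge, ← fromEdgeSet_union, union_singleton] at this

lemma IsForestEdgeSet.not_reachable_sdiff (hF : IsForestEdgeSet F) {u v : V}
    {p : (fromEdgeSet F).Walk u v} (hp : p.IsPath) {h : Sym2 V} (hh : h ∈ p.edges) :
    ¬ (fromEdgeSet (F \ {h})).Reachable u v := by
  classical
  rintro ⟨q⟩
  have hle : fromEdgeSet (F \ {h}) ≤ fromEdgeSet F := fromEdgeSet_mono sdiff_subset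
  have hq : (q.bypass.mapLe hle).IsPath := q.bypass_isPath.mapLe hle
  have hpq : p = q.bypass.mapLe hle :=
    congrArg Subtype.val ((hF.subsingleton_path u v).elim ⟨p, hp⟩ ⟨_, hq⟩)
  rw [hpq, Walk.edges_mapLe_eq_edges] at hh
  have hhq := q.bypass.edges_subset_edgeSet hh
  rw [edgeSet_fromEdgeSet] at hhq
  exact hhq.1.2 rfl

lemma arboricity_le_one (hF : IsForestEdgeSet F) : arboricity F ≤ 1 :=
  Nat.sInf_le ⟨fun _ => F, fun _ => hF, subset_iUnion (fun _ => F) 0⟩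

lemma exists_forest_partition [Finite V] (S : Set (Sym2 V)) :
    ∃ F : Fin (arboricity S) → Set (Sym2 V),
      (∀ i, IsForestEdgeSet (F i)) ∧ Pairwise (Disjoint on F) ∧ ⋃ i, F i = S := by
  have hne : {k : ℕ | ∃ F : Fin k → Set (Sym2 V),
      (∀ i, IsForestEdgeSet (F i)) ∧ S ⊆ ⋃ i, F i}.Nonempty := by
    refine ⟨Nat.card (Sym2 V), fun i => {(Finite.equivFin (Sym2 V)).symm i},
      fun _ => isForestEdgeSet_singleton _, fun g _ => mem_iUnion.mpr ⟨Finite.equivFin _ g, ?_⟩⟩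
    simp
  obtain ⟨F, hF, hS⟩ : arboricity S ∈ _ := Nat.sInf_mem hne
  refine ⟨disjointed fun i => F i ∩ S, fun i => (hF i).mono ((disjointed_le _ i).trans
    inter_subset_left), disjoint_disjointed _, ?_⟩
  rw [iUnion_disjointed, ← iUnion_inter, inter_eq_right.mpr hS]

end Forests

def IsMaxWeightForest (E : Set (Sym2 V)) (x : Sym2 V → ℝ) (F : Set (Sym2 V)) : Prop :=
  F ⊆ E ∧ IsForestEdgeSet F ∧ ∀ F' ⊆ E, IsForestEdgeSet F' → ∑ᶠ e ∈ F', x e ≤ ∑ᶠ e ∈ F, x e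

/-- Otherwise adding `s(u, v)` to `F`, after deleting a light edge of the path of `F` from `u`
to `v` if there is one, would give a heavier forest. -/
theorem IsMaxWeightForest.reachable [Finite V] {E F : Set (Sym2 V)} {x : Sym2 V → ℝ}
    (hF : IsMaxWeightForest E x F) {t : ℝ} (ht : 0 ≤ t) {u v : V} (huv : s(u, v) ∈ E)
    (hxuv : t < x s(u, v)) :
    (fromEdgeSet (F ∩ {e ∈ E | t < x e})).Reachable u v := by
  obtain ⟨hFE, hF, hmax⟩ := hF
  by_contra hnr
  have hne : u ≠ v := by rintro rfl; exact hnr (Reachable.refl u)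
  suffices ∃ F' ⊆ E, IsForestEdgeSet F' ∧ ∑ᶠ e ∈ F, x e < ∑ᶠ e ∈ F', x e by
    obtain ⟨F', hF'E, hF', hlt⟩ := this
    exact (hmax F' hF'E hF').not_gt hlt
  by_cases hreach : (fromEdgeSet F).Reachable u v
  · classical
    obtain ⟨p, hp⟩ := hreach.exists_isPath
    obtain ⟨h, hhp, hxh⟩ : ∃ h ∈ p.edges, x h ≤ t := by
      by_contra! hheavy
      refine hnr ⟨p.transfer _ fun e he => ?_⟩
      have heF := p.edges_subset_edgeSet he
      rw [edgeSet_fromEdgeSet] at heF ⊢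
      exact ⟨⟨heF.1, hFE heF.1, hheavy e he⟩, heF.2⟩
    have hhF : h ∈ F := by
      have hhF := p.edges_subset_edgeSet hhp
      rw [edgeSet_fromEdgeSet] at hhF
      exact hhF.1
    have hnr' := hF.not_reachable_sdiff hp hhp
    have huvF : s(u, v) ∉ F \ {h} := fun hmem =>
      hnr' ((fromEdgeSet_adj _).mpr ⟨hmem, hne⟩).reachable
    refine ⟨insert s(u, v) (F \ {h}), insert_subset huv (sdiff_subset.trans hFE),
      (hF.mono sdiff_subset).insert hnr', ?_⟩
    have hsplit : ∑ᶠ e ∈ F, x e = x h + ∑ᶠ e ∈ F \ {h}, x e := by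
      rw [← finsum_mem_insert _ (fun hmem => hmem.2 rfl) (toFinite _), insert_sdiff_singleton,
        insert_eq_of_mem hhF]
    rw [finsum_mem_insert _ huvF (toFinite _), hsplit]
    linarith
  · have huvF : s(u, v) ∉ F := fun hmem =>
      hreach ((fromEdgeSet_adj _).mpr ⟨hmem, hne⟩).reachable
    refine ⟨insert s(u, v) F, insert_subset huv hFE, hF.insert hreach, ?_⟩
    rw [finsum_mem_insert _ huvF (toFinite _)]
    linarith

section Core

variable {G : SimpleGraph V} {x : Sym2 V → ℝ}

lemma inCore.weight_le_one (hx : inCore G x) {F : Set (Sym2 V)} (hFE : F ⊆ G.edgeSet)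
    (hF : IsForestEdgeSet F) : ∑ᶠ e ∈ F, x e ≤ 1 :=
  (hx.2.2 F hFE).trans (mod_cast arboricity_le_one hF)

/-- Since a core allocation pays `arboricity G.edgeSet` in total and at most `1` on each forest,
it pays exactly `1` on each forest of a partition of the edges into that many forests. -/
lemma inCore.isMaxWeightForest_of_partition [Finite V] (hx : inCore G x)
    {F : Fin (arboricity G.edgeSet) → Set (Sym2 V)} (hF : ∀ i, IsForestEdgeSet (F i))
    (hdisj : Pairwise (Disjoint on F)) (hunion : ⋃ i, F i = G.edgeSet) (i) :
    IsMaxWeightForest G.edgeSet x (F i) := by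
  have hFE : ∀ i, F i ⊆ G.edgeSet := fun i => hunion ▸ subset_iUnion F i
  have hsum : ∑ i, ∑ᶠ e ∈ F i, x e = ∑ _i : Fin (arboricity G.edgeSet), (1 : ℝ) := by
    rw [← finsum_eq_sum_of_fintype, ← finsum_mem_iUnion hdisj fun _ => toFinite _, hunion,
      hx.2.1]
    simp
  have hone := (Finset.sum_eq_sum_iff_of_le fun i _ => hx.weight_le_one (hFE i) (hF i)).mp hsum
    i (Finset.mem_univ i)
  exact ⟨hFE i, hF i, fun F' hF'E hF' => hone ▸ hx.weight_le_one hF'E hF'⟩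

end Core

lemma Set.ncard_eq_sum_ncard_inter {α ι : Type*} [Finite α] [Fintype ι] {s : Set α}
    {F : ι → Set α} (hs : s ⊆ ⋃ i, F i) (hF : Pairwise (Disjoint on F)) :
    s.ncard = ∑ i, (s ∩ F i).ncard := by
  conv_lhs => rw [← inter_eq_left.mpr hs, inter_iUnion]
  rw [ncard_iUnion_of_finite (fun _ => toFinite _)
    fun i j hij => (hF hij).mono inter_subset_right inter_subset_right,
    finsum_eq_sum_of_fintype]

namespace SimpleGraph

variable {G Γ : SimpleGraph V}

lemma reachable_eq_of_le_of_adj {G₁ G₂ : SimpleGraph V} (hle : G₁ ≤ G₂)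
    (h : ∀ ⦃u v⦄, G₂.Adj u v → G₁.Reachable u v) : G₁.Reachable = G₂.Reachable := by
  ext u v
  refine ⟨fun huv => huv.mono hle, fun ⟨p⟩ => ?_⟩
  induction p with
  | nil => rfl
  | cons hadj _ ih => exact (h hadj).trans (ih ⟨‹_›⟩)

abbrev componentSubgraph (h : Γ ≤ G) (C : Γ.ConnectedComponent) : G.Subgraph :=
  (toSubgraph Γ h).induce C.supp

lemma coe_componentSubgraph (h : Γ ≤ G) (C : Γ.ConnectedComponent) :
    (componentSubgraph h C).coe = C.toSimpleGraph := by
  ext a b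
  simp only [Subgraph.coe_adj, Subgraph.induce_adj, toSubgraph_adj,
    ConnectedComponent.toSimpleGraph]
  exact ⟨fun h => h.2.2, fun h => ⟨a.2, b.2, h⟩⟩

lemma componentSubgraph_connected (h : Γ ≤ G) (C : Γ.ConnectedComponent) :
    (componentSubgraph h C).Connected :=
  ⟨coe_componentSubgraph h C ▸ C.connected_toSimpleGraph⟩

lemma Subgraph.ncard_edgeSet_add_one_of_isTree [Finite V] {H : G.Subgraph}
    (hH : H.coe.IsTree) : H.edgeSet.ncard + 1 = H.verts.ncard := by
  have hcard := (isTree_iff_connected_and_card.mp hH).2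
  rw [Nat.card_coe_set_eq, Nat.card_coe_set_eq] at hcard
  rwa [← Subgraph.image_coe_edgeSet_coe,
    ncard_image_of_injective _ (Sym2.map.injective Subtype.val_injective)]

lemma ncard_edgeSet_componentSubgraph_add_one [Finite V] (h : Γ ≤ G) (hΓ : Γ.IsAcyclic)
    (C : Γ.ConnectedComponent) : (componentSubgraph h C).edgeSet.ncard + 1 = C.supp.ncard :=
  Subgraph.ncard_edgeSet_add_one_of_isTree
    (coe_componentSubgraph h C ▸ hΓ.isTree_connectedComponent C)

end SimpleGraph

lemma density_eq_of_ncard_edgeSet {H : G.Subgraph} {a : ℕ} (hv : 2 ≤ H.verts.ncard)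
    (he : H.edgeSet.ncard = a * (H.verts.ncard - 1)) : density G H = a := by
  have hpos : (H.verts.ncard : ℝ) - 1 ≠ 0 := by
    have : (2 : ℝ) ≤ H.verts.ncard := mod_cast hv
    linarith
  rw [density, he, Nat.cast_mul, Nat.cast_sub (by omega), Nat.cast_one, mul_div_assoc,
    div_self hpos, mul_one]

/-- Each forest restricts to a spanning tree of every component of `A`, and the forests are
edge-disjoint, so a component with `n` vertices has `a * (n - 1)` edges. -/
theorem exists_connected_density_eq_of_forest_partition [Finite V] {G : SimpleGraph V}
    {A : Set (Sym2 V)} (hA : A ⊆ G.edgeSet) {a : ℕ} {F : Fin a → Set (Sym2 V)}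
    (hF : ∀ i, IsForestEdgeSet (F i)) (hdisj : Pairwise (Disjoint on F))
    (hcover : A ⊆ ⋃ i, F i)
    (hspan : ∀ i ⦃u v⦄, s(u, v) ∈ A → (fromEdgeSet (F i ∩ A)).Reachable u v)
    {e : Sym2 V} (he : e ∈ A) :
    ∃ H : G.Subgraph, H.Connected ∧ density G H = a ∧ e ∈ H.edgeSet ∧ H.edgeSet ⊆ A := by
  induction e using Sym2.ind with | _ u v => ?_
  have hΓ : fromEdgeSet A ≤ G := G.fromEdgeSet_le.mpr (sdiff_subset.trans hA)
  have huv : (fromEdgeSet A).Adj u v := (fromEdgeSet_adj A).mpr ⟨he, (hA he).ne⟩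
  set C := (fromEdgeSet A).connectedComponentMk u
  set H := componentSubgraph hΓ C
  have hv : v ∈ C.supp := (ConnectedComponent.connectedComponentMk_eq_of_adj huv).symm
  have hHA : H.edgeSet ⊆ A := fun e he => by
    induction e using Sym2.ind with | _ x y => exact ((fromEdgeSet_adj A).mp he.2.2).1
  have htree (i : Fin a) : (H.edgeSet ∩ F i).ncard + 1 = C.supp.ncard := by
    have hle : fromEdgeSet (F i ∩ A) ≤ fromEdgeSet A := fromEdgeSet_mono inter_subset_right
    set Ci := (fromEdgeSet (F i ∩ A)).connectedComponentMk u
    have hsupp : Ci.supp = C.supp := by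
      ext w
      simp only [ConnectedComponent.mem_supp_iff, ConnectedComponent.eq, Ci, C,
        reachable_eq_of_le_of_adj hle fun x y hxy => hspan i ((fromEdgeSet_adj A).mp hxy).1]
    have hedge : (componentSubgraph (hle.trans hΓ) Ci).edgeSet = H.edgeSet ∩ F i := by
      ext e
      induction e using Sym2.ind with
      | _ x y => simp only [Subgraph.mem_edgeSet, Subgraph.induce_adj, toSubgraph_adj, hsupp,
          fromEdgeSet_adj, mem_inter_iff, H]; tauto
    rw [← hedge, ← hsupp]
    exact ncard_edgeSet_componentSubgraph_add_one _ ((hF i).mono inter_subset_left) Ci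
  have htwo : 2 ≤ C.supp.ncard :=
    (one_lt_ncard (toFinite _)).mpr ⟨u, rfl, v, hv, (hA he).ne⟩
  refine ⟨H, componentSubgraph_connected hΓ C, density_eq_of_ncard_edgeSet htwo ?_,
    ⟨rfl, hv, huv⟩, hHA⟩
  rw [ncard_eq_sum_ncard_inter (hHA.trans hcover) hdisj,
    Finset.sum_congr rfl fun i _ => Nat.eq_sub_of_add_eq (htree i), Finset.sum_const,
    Finset.card_univ, Fintype.card_fin, smul_eq_mul]
  rfl

theorem core_monotone_ancestor_general [Fintype V] (G : SimpleGraph V)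
    (hcore : fracArboricity G = (arboricity G.edgeSet : ℝ))
    (P Q : Set (Sym2 V)) (hPE : P ⊆ G.edgeSet)
    (hP : ∀ H : G.Subgraph, IsDensest G H → P ⊆ H.edgeSet ∨ P ∩ H.edgeSet = ∅)
    (hanc : ∀ H : G.Subgraph, IsDensest G H → P ⊆ H.edgeSet → Q ⊆ H.edgeSet)
    (x : Sym2 V → ℝ) (hx : inCore G x) (e f : Sym2 V) (he : e ∈ P) (hf : f ∈ Q) :
    x e ≤ x f := by
  by_contra! hlt
  obtain ⟨F, hF, hdisj, hunion⟩ := exists_forest_partition G.edgeSet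
  set A := {g ∈ G.edgeSet | x f < x g}
  have hspan (i) ⦃u v⦄ (huv : s(u, v) ∈ A) : (fromEdgeSet (F i ∩ A)).Reachable u v :=
    (hx.isMaxWeightForest_of_partition hF hdisj hunion i).reachable (hx.1 f) huv.1 huv.2
  obtain ⟨H, hconn, hdens, heH, hHA⟩ := exists_connected_density_eq_of_forest_partition
    (sep_subset _ _) hF hdisj ((sep_subset _ _).trans hunion.symm.subset) hspan (e := e)
    ⟨hPE he, hlt⟩
  have hH : IsDensest G H := ⟨hconn, hdens.trans hcore.symm⟩
  have hPH : P ⊆ H.edgeSet := (hP H hH).resolve_right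
    (nonempty_of_mem (show e ∈ P ∩ H.edgeSet from ⟨he, heH⟩)).ne_empty
  exact lt_irrefl _ (hHA (hanc H hH hPH hf)).2

/-- monotonicity along the ancestor relation: if Q is an ancestor of
the prime set P (every densest subgraph containing P contains Q), then in every
core allocation edges of P get at most the value of edges of Q. -/
theorem core_monotone_ancestor [Fintype V] (G : SimpleGraph V) (hG : G.Connected)
    (hcore : fracArboricity G = (arboricity G.edgeSet : ℝ))
    (P Q : Set (Sym2 V)) (hPE : P ⊆ G.edgeSet) (hQE : Q ⊆ G.edgeSet)
    (hP : ∀ H : G.Subgraph, IsDensest G H → P ⊆ H.edgeSet ∨ P ∩ H.edgeSet = ∅)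
    (hQ : ∀ H : G.Subgraph, IsDensest G H → Q ⊆ H.edgeSet ∨ Q ∩ H.edgeSet = ∅)
    (hanc : ∀ H : G.Subgraph, IsDensest G H → P ⊆ H.edgeSet → Q ⊆ H.edgeSet)
    (x : Sym2 V → ℝ) (hx : inCore G x) (e f : Sym2 V) (he : e ∈ P) (hf : f ∈ Q) :
    x e ≤ x f :=
  core_monotone_ancestor_general G hcore P Q hPE hP hanc x hx e f he hf
end
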